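/- arXiv:1505.07440 — 3 statements merged into one kernel-verified Lean document; each statement's English description precedes it below -/
import Mathlib

section
/- Let P ⊂ ℝ^d be a full-dimensional polytope dissected as P = P₁ ∪ ⋯ ∪ P_k where each P_i is a full-dimensional polytope and dim(P_i ∩ P_j) < d for i ≠ j. Let q ∈ ℝ^d be a point not lying on any facet-defining hyperplane of any P_i. Then the half-open polytopes H_q P₁, …, H_q P_k are pairwise disjoint and their union is H_q P, where H_q Q denotes Q with all facets removed whose facet hyperplane strictly separates q from Q. -/
/-!
Look at `x` from `q`: the points `x + t (q - x)` for small `t > 0` decide everything.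
Whether a facet inequality `f ≤ 0` holds along this segment is determined by the pair
`(f x, f q)`, and since `f q ≠ 0` one finds that `x ∈ H_q P` iff these points lie in `P`
for arbitrarily small `t`, iff they lie in the interior of `P` for all small `t`.
A point of `H_q P` thus sends its segment into `P = ⋃ P_i`, hence frequently into a
single `P_i`; a point of `H_q P_i` sends it into `interior P_i ⊆ P`; and a point of
`H_q P_i ∩ H_q P_j` would send it into `interior (P_i ∩ P_j) = ∅`.
-/

/-- The half-open polytope `H_q P` associated to a full-dimensional polytope
`P = {x : f x ≤ 0 for all f ∈ F}` (given by its facet inequalities `F`) and a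
general point `q`: the facets whose hyperplane strictly separates `q` from `P`
(i.e. `f q > 0`) are removed. -/
def halfOpenPolytope (d : ℕ) (F : Finset ((Fin d → ℝ) →ᵃ[ℝ] ℝ))
    (q : Fin d → ℝ) : Set (Fin d → ℝ) :=
  {x | (∀ f ∈ F, f x ≤ 0) ∧ ∀ f ∈ F, 0 < f q → f x < 0}

open Filter Topology AffineMap

theorem eventually_lineMap_neg {a b : ℝ} (ha : a ≤ 0) (hb : a = 0 → b < 0) :
    ∀ᶠ t in 𝓝[>] (0 : ℝ), lineMap a b t < 0 := by
  rcases ha.lt_or_eq with ha | rfl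
  · have hlim : Tendsto (lineMap a b) (𝓝 (0 : ℝ)) (𝓝 a) := by
      simpa using (lineMap_continuous (p := a) (q := b)).tendsto (0 : ℝ)
    exact nhdsWithin_le_nhds (hlim.eventually (eventually_lt_nhds ha))
  · filter_upwards [self_mem_nhdsWithin] with t (ht : 0 < t)
    simpa [lineMap_apply_ring'] using mul_neg_of_pos_of_neg ht (hb rfl)

theorem nonpos_of_frequently_lineMap_nonpos {a b : ℝ}
    (h : ∃ᶠ t in 𝓝[>] (0 : ℝ), lineMap a b t ≤ 0) : a ≤ 0 ∧ (a = 0 → b ≤ 0) := by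
  contrapose! h
  have hneg : ∀ᶠ t in 𝓝[>] (0 : ℝ), lineMap (-a) (-b) t < 0 := by
    by_cases ha : a ≤ 0
    · obtain ⟨rfl, hb⟩ := h ha
      exact eventually_lineMap_neg neg_zero.le fun _ => neg_neg_of_pos hb
    · exact eventually_lineMap_neg (by linarith) fun h0 => absurd (neg_eq_zero.1 h0) (by linarith)
  refine hneg.mono fun t ht => ?_
  have hlin : lineMap (-a) (-b) t = -lineMap a b t := by simp only [lineMap_apply_ring']; ring
  linarith

variable {d : ℕ} {F : Finset ((Fin d → ℝ) →ᵃ[ℝ] ℝ)} {q x : Fin d → ℝ}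

theorem setOf_forall_lt_subset_interior :
    {y : Fin d → ℝ | ∀ f ∈ F, f y < 0} ⊆ interior {y | ∀ f ∈ F, f y ≤ 0} := by
  refine interior_maximal (fun y hy f hf => (hy f hf).le) ?_
  simp only [Set.ofPred_forall]
  exact isOpen_biInter_finset fun f _ =>
    isOpen_lt f.continuous_of_finiteDimensional continuous_const

theorem eventually_lineMap_mem_interior (hq : ∀ f ∈ F, f q ≠ 0)
    (hx : x ∈ halfOpenPolytope d F q) :
    ∀ᶠ t in 𝓝[>] (0 : ℝ), lineMap x q t ∈ interior {y | ∀ f ∈ F, f y ≤ 0} := by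
  have hstrict : ∀ᶠ t in 𝓝[>] (0 : ℝ), ∀ f ∈ F, f (lineMap x q t) < 0 := by
    refine (eventually_all_finset F).2 fun f hf => ?_
    simp only [apply_lineMap]
    refine eventually_lineMap_neg (hx.1 f hf) fun h0 => (hq f hf).lt_of_le ?_
    exact not_lt.1 fun hpos => (hx.2 f hf hpos).ne h0
  exact hstrict.mono fun t ht => setOf_forall_lt_subset_interior ht

theorem mem_halfOpenPolytope_of_frequently
    (h : ∃ᶠ t in 𝓝[>] (0 : ℝ), lineMap x q t ∈ {y | ∀ f ∈ F, f y ≤ 0}) :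
    x ∈ halfOpenPolytope d F q := by
  have hsign : ∀ f ∈ F, f x ≤ 0 ∧ (f x = 0 → f q ≤ 0) := fun f hf =>
    nonpos_of_frequently_lineMap_nonpos <| h.mono fun t ht => by
      simpa only [apply_lineMap] using ht f hf
  exact ⟨fun f hf => (hsign f hf).1, fun f hf hpos =>
    (hsign f hf).1.lt_of_ne fun h0 => ((hsign f hf).2 h0).not_gt hpos⟩

theorem halfopen_decomposition_general (d k : ℕ)
    (F : Fin k → Finset ((Fin d → ℝ) →ᵃ[ℝ] ℝ))
    (F₀ : Finset ((Fin d → ℝ) →ᵃ[ℝ] ℝ))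
    (P : Fin k → Set (Fin d → ℝ)) (P₀ : Set (Fin d → ℝ))
    (hP : ∀ i, P i = {x | ∀ f ∈ F i, f x ≤ 0})
    (hP₀ : P₀ = {x | ∀ f ∈ F₀, f x ≤ 0})
    (hunion : P₀ = ⋃ i, P i)
    (hdis : ∀ i j, i ≠ j → interior (P i ∩ P j) = ∅)
    (q : Fin d → ℝ)
    (hq : ∀ i, ∀ f ∈ F i, f q ≠ 0) (hq₀ : ∀ f ∈ F₀, f q ≠ 0) :
    halfOpenPolytope d F₀ q = (⋃ i, halfOpenPolytope d (F i) q) ∧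
      ∀ i j, i ≠ j →
        Disjoint (halfOpenPolytope d (F i) q) (halfOpenPolytope d (F j) q) := by
  obtain rfl : P = fun i => {x | ∀ f ∈ F i, f x ≤ 0} := funext hP
  subst hP₀
  beta_reduce at hunion hdis
  refine ⟨Set.Subset.antisymm (fun x hx => ?_) (Set.iUnion_subset fun i x hx => ?_), ?_⟩
  · have hcover :
        ∃ᶠ t in 𝓝[>] (0 : ℝ), ∃ i, lineMap x q t ∈ {y | ∀ f ∈ F i, f y ≤ 0} := by
      refine (eventually_lineMap_mem_interior hq₀ hx).frequently.mono fun t ht => ?_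
      exact Set.mem_iUnion.1 (hunion ▸ interior_subset ht)
    obtain ⟨i, hi⟩ := frequently_exists.1 hcover
    exact Set.mem_iUnion.2 ⟨i, mem_halfOpenPolytope_of_frequently hi⟩
  · refine mem_halfOpenPolytope_of_frequently
      ((eventually_lineMap_mem_interior (hq i) hx).frequently.mono fun t ht => ?_)
    exact hunion ▸ Set.mem_iUnion.2 ⟨i, interior_subset ht⟩
  · refine fun i j hij => Set.disjoint_left.2 fun x hxi hxj => ?_
    obtain ⟨t, hti, htj⟩ := ((eventually_lineMap_mem_interior (hq i) hxi).and
      (eventually_lineMap_mem_interior (hq j) hxj)).exists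
    have hboth : lineMap x q t ∈
        interior ({y | ∀ f ∈ F i, f y ≤ 0} ∩ {y | ∀ f ∈ F j, f y ≤ 0}) := by
      rw [interior_inter]
      exact ⟨hti, htj⟩
    rwa [hdis i j hij] at hboth

/-- Half-open decomposition (Köppe–Verdoolaege): if `P = P₁ ∪ ⋯ ∪ P_k` is a
dissection of a full-dimensional polytope into full-dimensional polytopes with
lower-dimensional pairwise intersections, each given by irredundant facet
inequalities, and `q` lies on no facet hyperplane of any `P_i` (nor of `P`),
then the half-open polytopes `H_q P₁, …, H_q P_k` are pairwise disjoint with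
union `H_q P`. -/
theorem halfopen_decomposition (d k : ℕ)
    (F : Fin k → Finset ((Fin d → ℝ) →ᵃ[ℝ] ℝ))
    (F₀ : Finset ((Fin d → ℝ) →ᵃ[ℝ] ℝ))
    (P : Fin k → Set (Fin d → ℝ)) (P₀ : Set (Fin d → ℝ))
    (hP : ∀ i, P i = {x | ∀ f ∈ F i, f x ≤ 0})
    (hP₀ : P₀ = {x | ∀ f ∈ F₀, f x ≤ 0})
    (hcompact : ∀ i, IsCompact (P i)) (hcompact₀ : IsCompact P₀)
    (hfull : ∀ i, (interior (P i)).Nonempty) (hfull₀ : (interior P₀).Nonempty)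
    (hfacet : ∀ i, ∀ f ∈ F i, ∃ x ∈ P i, f x = 0 ∧ ∀ g ∈ F i, g ≠ f → g x < 0)
    (hfacet₀ : ∀ f ∈ F₀, ∃ x ∈ P₀, f x = 0 ∧ ∀ g ∈ F₀, g ≠ f → g x < 0)
    (hunion : P₀ = ⋃ i, P i)
    (hdis : ∀ i j, i ≠ j → interior (P i ∩ P j) = ∅)
    (q : Fin d → ℝ)
    (hq : ∀ i, ∀ f ∈ F i, f q ≠ 0) (hq₀ : ∀ f ∈ F₀, f q ≠ 0) :
    halfOpenPolytope d F₀ q = (⋃ i, halfOpenPolytope d (F i) q) ∧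
      ∀ i j, i ≠ j →
        Disjoint (halfOpenPolytope d (F i) q) (halfOpenPolytope d (F j) q) :=
  halfopen_decomposition_general d k F F₀ P P₀ hP hP₀ hunion hdis q hq hq₀
end

section
/- For every finite simplicial complex 𝒞 on vertex set {1,…,m}, there exist lattice polytopes P and Q in ℝ^m such that the Q-complement complex {F ⊆ P face : F ∩ Q = ∅} is combinatorially isomorphic to 𝒞. Concretely, with P = m!·conv(e₁,…,e_m) and Q = m!·conv{w_I : I ∉ 𝒞} where w_I is the barycenter (1/|I|)Σ_{i∈I} e_i, the face F_I = conv(e_i : i ∈ I) of the simplex satisfies F_I ∩ conv{w_J : J ∉ 𝒞} = ∅ if and only if I ∈ 𝒞. -/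
/-! The face `conv(e_i : i ∈ I)` puts no mass outside `I`, whereas the barycenter of any
`J ⊄ I` does; so the linear functional `x ↦ ∑_{j ∉ I} x j` separates the face from the
convex hull of the barycenters of the non-faces as soon as every non-face escapes `I`,
i.e. as soon as `I ∈ 𝒞`. Conversely, for `I ∉ 𝒞` the barycenter `w_I` lies in both. -/

/-- Barycenter `w_J = (1/|J|) Σ_{i∈J} e_i` of the face of the standard simplex
spanned by `{e_i : i ∈ J}`. -/
noncomputable def bary (m : ℕ) (J : Finset (Fin m)) : Fin m → ℝ :=
  (J.card : ℝ)⁻¹ • ∑ i ∈ J, Pi.single i (1 : ℝ)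

lemma isLinearMap_sum_apply {ι : Type*} (s : Finset ι) :
    IsLinearMap ℝ fun x : ι → ℝ => ∑ j ∈ s, x j where
  map_add x y := by simp only [Pi.add_apply, Finset.sum_add_distrib]
  map_smul c x := by simp only [Pi.smul_apply, smul_eq_mul, Finset.mul_sum]

lemma convexHull_single_subset_sum_eq_zero {ι : Type*} [DecidableEq ι] {I s : Finset ι} (hsI : Disjoint s I) :
    convexHull ℝ ((fun i : ι => Pi.single i (1 : ℝ)) '' (I : Set ι)) ⊆
      {x | ∑ j ∈ s, x j = 0} := by
  refine convexHull_min ?_ (convex_hyperplane (isLinearMap_sum_apply s) 0)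
  rintro _ ⟨i, hi, rfl⟩
  have his : i ∉ s := Finset.disjoint_right.1 hsI hi
  simp [Pi.single_apply, his]

lemma bary_apply (m : ℕ) (J : Finset (Fin m)) (j : Fin m) :
    bary m J j = if j ∈ J then (J.card : ℝ)⁻¹ else 0 := by
  simp [bary, Finset.sum_apply, Pi.single_apply]

lemma bary_mem_convexHull {m : ℕ} {J : Finset (Fin m)} (hJ : J.Nonempty) :
    bary m J ∈ convexHull ℝ ((fun i : Fin m => Pi.single i (1 : ℝ)) '' (J : Set (Fin m))) := by
  have hcard : (0 : ℝ) < ∑ _ ∈ J, (1 : ℝ) := by simpa using hJ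
  have hmem := J.centerMass_mem_convexHull (fun _ _ => zero_le_one) hcard
    (fun i hi => Set.mem_image_of_mem (fun i : Fin m => Pi.single i (1 : ℝ)) hi)
  simpa [Finset.centerMass, bary] using hmem

lemma sum_compl_bary_pos {m : ℕ} {I J : Finset (Fin m)} (hJI : ¬J ⊆ I) :
    0 < ∑ j ∈ Iᶜ, bary m J j := by
  obtain ⟨j, hjJ, hjI⟩ := Finset.not_subset.1 hJI
  have hJ : (0 : ℝ) < J.card := by exact_mod_cast J.card_pos.2 ⟨j, hjJ⟩
  have hnonneg : ∀ k ∈ Iᶜ, 0 ≤ bary m J k := fun k _ => by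
    rw [bary_apply]; split_ifs <;> positivity
  calc 0 < bary m J j := by rw [bary_apply, if_pos hjJ]; positivity
    _ ≤ ∑ j ∈ Iᶜ, bary m J j := Finset.single_le_sum hnonneg (Finset.mem_compl.2 hjI)

theorem Q_complement_universal_general (m : ℕ) (𝒞 : Finset (Finset (Fin m)))
    (hdown : ∀ s ∈ 𝒞, ∀ t ⊆ s, t ∈ 𝒞)
    (I : Finset (Fin m)) (hI : I.Nonempty) :
    convexHull ℝ ((fun i : Fin m => Pi.single i (1 : ℝ)) '' (I : Set (Fin m))) ∩
        convexHull ℝ {x : Fin m → ℝ | ∃ J : Finset (Fin m), J ∉ 𝒞 ∧ x = bary m J} =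
      ∅ ↔ I ∈ 𝒞 := by
  rw [Set.eq_empty_iff_forall_notMem]
  constructor
  · intro hdisj
    by_contra hIC
    exact hdisj (bary m I) ⟨bary_mem_convexHull hI, subset_convexHull ℝ _ ⟨I, hIC, rfl⟩⟩
  · rintro hIC x ⟨hxF, hxQ⟩
    have hQ : convexHull ℝ {x : Fin m → ℝ | ∃ J : Finset (Fin m), J ∉ 𝒞 ∧ x = bary m J} ⊆
        {x | 0 < ∑ j ∈ Iᶜ, x j} := by
      refine convexHull_min ?_ (convex_halfSpace_gt (isLinearMap_sum_apply Iᶜ) 0)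
      rintro _ ⟨J, hJ, rfl⟩
      exact sum_compl_bary_pos fun hJI => hJ (hdown I hIC J hJI)
    have hxF : ∑ j ∈ Iᶜ, x j = 0 := convexHull_single_subset_sum_eq_zero disjoint_compl_left hxF
    exact (hQ hxQ).ne' hxF

/-- Q-complements are universal: for a simplicial complex `𝒞` on `{1,…,m}`,
the face `F_I = conv(e_i : i ∈ I)` of the standard simplex is disjoint from
`Q = conv{w_J : J ∉ 𝒞}` (the convex hull of the barycenters of the non-faces)
if and only if `I ∈ 𝒞`. -/
theorem Q_complement_universal (m : ℕ) (𝒞 : Finset (Finset (Fin m)))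
    (hempty : ∅ ∈ 𝒞)
    (hdown : ∀ s ∈ 𝒞, ∀ t ⊆ s, t ∈ 𝒞)
    (I : Finset (Fin m)) (hI : I.Nonempty) :
    convexHull ℝ ((fun i : Fin m => Pi.single i (1 : ℝ)) '' (I : Set (Fin m))) ∩
        convexHull ℝ {x : Fin m → ℝ | ∃ J : Finset (Fin m), J ∉ 𝒞 ∧ x = bary m J} =
      ∅ ↔ I ∈ 𝒞 :=
  Q_complement_universal_general m 𝒞 hdown I hI
end

section
/- The Steiner valuation is not combinatorially positive in dimension d ≥ 2: for the segment P = [0, αe₁] ⊂ ℝ^d and S(K) = vol_d(K + B_d) with B_d the unit ball, the alternating face sum S(relint P) = S(P) − S({0}) − S({αe₁}) equals α·vol_{d−1}(B_{d−1}) − vol_d(B_d), which is negative for sufficiently small α > 0. -/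
open MeasureTheory
open scoped Pointwise

/-- The alternating face sum `S(relint P) = S(P) - S({0}) - S({αe₁})` of the
Steiner valuation `S(K) = vol(K + B_d)` for the segment `P = [0, αe₁] ⊂ ℝ^d`,
`d = d'+2 ≥ 2`. -/
noncomputable def steinerFaceSum (d : ℕ) (α : ℝ) : ℝ :=
  (volume (segment ℝ (0 : EuclideanSpace ℝ (Fin (d + 2)))
      (α • EuclideanSpace.single (0 : Fin (d + 2)) (1 : ℝ)) +
    Metric.closedBall (0 : EuclideanSpace ℝ (Fin (d + 2))) 1)).toReal -
  (volume (({0} : Set (EuclideanSpace ℝ (Fin (d + 2)))) +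
    Metric.closedBall (0 : EuclideanSpace ℝ (Fin (d + 2))) 1)).toReal -
  (volume (({α • EuclideanSpace.single (0 : Fin (d + 2)) (1 : ℝ)} :
      Set (EuclideanSpace ℝ (Fin (d + 2)))) +
    Metric.closedBall (0 : EuclideanSpace ℝ (Fin (d + 2))) 1)).toReal

/-! Write a point of `ℝ^{n+1}` as `(y, t)`, with `y ∈ ℝ^n` its last `n` coordinates and `t`
its first one. The tube `[0, a e₀] + B_{n+1}` is the region `-h y ≤ t ≤ a + h y` over
`y ∈ B_n`, where `h y = √(1 - ‖y‖²)`, so by Fubini its volume is `∫_{B_n} (a + 2 h)`. For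
`a = 0` the tube is the ball itself, hence `vol ([0, a e₀] + B_{n+1}) = vol B_{n+1} + a vol B_n`.
Each vertex contributes a translate of `B_{n+1}`, so the face sum is `a vol B_n - vol B_{n+1}`,
negative for `a < vol B_{n+1} / vol B_n`. -/

open Set Metric

theorem volume_region_between_cc_eq_lintegral {α : Type*} [MeasurableSpace α] {μ : Measure α}
    {f g : α → ℝ} {s : Set α} (hf : Measurable f) (hg : Measurable g) (hs : MeasurableSet s) :
    μ.prod volume {p : α × ℝ | p.1 ∈ s ∧ p.2 ∈ Icc (f p.1) (g p.1)} =
      ∫⁻ y in s, ENNReal.ofReal (g y - f y) ∂μ := by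
  rw [Measure.prod_apply (measurableSet_region_between_cc hf hg hs), ← lintegral_indicator hs]
  congr 1 with y
  by_cases hy : y ∈ s
  · simp [hy, preimage, ← Real.volume_Icc, Icc]
  · simp [hy]

theorem Real.exists_mem_Icc_sq_sub_le_iff {a b t c : ℝ} (hab : a ≤ b) :
    (∃ s ∈ Icc a b, (t - s) ^ 2 ≤ c) ↔ 0 ≤ c ∧ t ∈ Icc (a - √c) (b + √c) := by
  constructor
  · rintro ⟨s, ⟨hsa, hsb⟩, hs⟩
    have hc : 0 ≤ c := (sq_nonneg _).trans hs
    obtain ⟨h₁, h₂⟩ := (Real.sq_le hc).1 hs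
    exact ⟨hc, by linarith, by linarith⟩
  · rintro ⟨hc, ht₁, ht₂⟩
    -- take for `s` the point of `[a, b]` nearest to `t`
    refine ⟨max a (min b t), ⟨le_max_left _ _, max_le hab (min_le_left _ _)⟩,
      (Real.sq_le hc).2 ⟨?_, ?_⟩⟩ <;>
    rcases max_cases a (min b t) with ⟨h₁, _⟩ | ⟨h₁, _⟩ <;>
    rcases min_cases b t with ⟨h₂, _⟩ | ⟨h₂, _⟩ <;> linarith [Real.sqrt_nonneg c]

theorem mem_segment_zero_smul_add_closedBall_iff {E : Type*} [NormedAddCommGroup E]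
    [NormedSpace ℝ E] {v x : E} {a r : ℝ} (ha : 0 ≤ a) :
    x ∈ segment ℝ 0 (a • v) + closedBall 0 r ↔ ∃ s ∈ Icc 0 a, ‖x - s • v‖ ≤ r := by
  have hseg : segment ℝ (0 : E) (a • v) = (· • v) '' Icc 0 a := by
    simpa [segment_eq_Icc ha] using
      (image_segment ℝ (LinearMap.toSpanSingleton ℝ E v).toAffineMap 0 a).symm
  simp [hseg, mem_add, ← eq_sub_iff_add_eq']

namespace EuclideanSpace

variable {n : ℕ}

noncomputable def tail (x : EuclideanSpace ℝ (Fin (n + 1))) : EuclideanSpace ℝ (Fin n) :=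
  WithLp.toLp 2 (Fin.tail x.ofLp)

theorem norm_sq_eq_norm_tail_sq_add (x : EuclideanSpace ℝ (Fin (n + 1))) :
    ‖x‖ ^ 2 = ‖tail x‖ ^ 2 + x 0 ^ 2 := by
  simp [EuclideanSpace.norm_sq_eq, Fin.sum_univ_succ, tail, Fin.tail, add_comm]

@[simp]
theorem tail_sub (x y : EuclideanSpace ℝ (Fin (n + 1))) : tail (x - y) = tail x - tail y := rfl

@[simp]
theorem tail_smul_single_zero (s : ℝ) : tail (s • single (0 : Fin (n + 1)) (1 : ℝ)) = 0 := by
  ext j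
  simp [tail, Fin.tail, Fin.succ_ne_zero]

variable (n) in
noncomputable def tailProdHead :
    EuclideanSpace ℝ (Fin (n + 1)) ≃ᵐ EuclideanSpace ℝ (Fin n) × ℝ :=
  (MeasurableEquiv.toLp 2 _).symm.trans <|
    (MeasurableEquiv.piFinSuccAbove (fun _ => ℝ) 0).trans <|
      ((MeasurableEquiv.refl ℝ).prodCongr (MeasurableEquiv.toLp 2 _)).trans
        MeasurableEquiv.prodComm

theorem tailProdHead_apply (x : EuclideanSpace ℝ (Fin (n + 1))) :
    tailProdHead n x = (tail x, x 0) := rfl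

theorem measurePreserving_tailProdHead : MeasurePreserving (tailProdHead n) :=
  Measure.measurePreserving_swap.comp <|
    (((MeasurePreserving.id _).prod (PiLp.volume_preserving_toLp _)).comp
      (volume_preserving_piFinSuccAbove (fun _ => ℝ) 0)).comp
      (volume_preserving_symm_measurableEquiv_toLp _)

end EuclideanSpace

section Tube

open EuclideanSpace

variable {n : ℕ} {a : ℝ}

theorem mem_segment_single_zero_add_closedBall_iff (ha : 0 ≤ a)
    (x : EuclideanSpace ℝ (Fin (n + 1))) :
    x ∈ segment ℝ 0 (a • single (0 : Fin (n + 1)) (1 : ℝ)) + closedBall 0 1 ↔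
      tail x ∈ closedBall 0 1 ∧
        x 0 ∈ Icc (-√(1 - ‖tail x‖ ^ 2)) (a + √(1 - ‖tail x‖ ^ 2)) := by
  have hdist (s : ℝ) :
      ‖x - s • single 0 1‖ ≤ 1 ↔ (x 0 - s) ^ 2 ≤ 1 - ‖tail x‖ ^ 2 := by
    rw [← sq_le_one_iff₀ (norm_nonneg _), norm_sq_eq_norm_tail_sq_add, le_sub_iff_add_le']
    simp
  simp_rw [mem_segment_zero_smul_add_closedBall_iff ha, hdist,
    Real.exists_mem_Icc_sq_sub_le_iff ha, zero_sub, sub_nonneg, mem_closedBall_zero_iff,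
    sq_le_one_iff₀ (norm_nonneg _)]

theorem volume_segment_single_zero_add_closedBall_eq_lintegral (ha : 0 ≤ a) :
    volume (segment ℝ 0 (a • single (0 : Fin (n + 1)) (1 : ℝ)) +
        closedBall (0 : EuclideanSpace ℝ (Fin (n + 1))) 1) =
      ∫⁻ y in closedBall (0 : EuclideanSpace ℝ (Fin n)) 1,
        ENNReal.ofReal (a + 2 * √(1 - ‖y‖ ^ 2)) := by
  have hf : Measurable fun y : EuclideanSpace ℝ (Fin n) => -√(1 - ‖y‖ ^ 2) := by fun_prop
  have hg : Measurable fun y : EuclideanSpace ℝ (Fin n) => a + √(1 - ‖y‖ ^ 2) := by fun_prop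
  have htube : segment ℝ 0 (a • single (0 : Fin (n + 1)) (1 : ℝ)) + closedBall 0 1 =
      tailProdHead n ⁻¹' {p | p.1 ∈ closedBall 0 1 ∧
        p.2 ∈ Icc (-√(1 - ‖p.1‖ ^ 2)) (a + √(1 - ‖p.1‖ ^ 2))} := by
    ext x
    exact mem_segment_single_zero_add_closedBall_iff ha x
  rw [htube, measurePreserving_tailProdHead.measure_preimage
    (measurableSet_region_between_cc hf hg measurableSet_closedBall).nullMeasurableSet,
    Measure.volume_eq_prod, volume_region_between_cc_eq_lintegral hf hg measurableSet_closedBall]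
  congr with y
  ring_nf

theorem volume_segment_single_zero_add_closedBall (ha : 0 ≤ a) :
    volume (segment ℝ 0 (a • single (0 : Fin (n + 1)) (1 : ℝ)) +
        closedBall (0 : EuclideanSpace ℝ (Fin (n + 1))) 1) =
      volume (closedBall (0 : EuclideanSpace ℝ (Fin (n + 1))) 1) +
        ENNReal.ofReal a * volume (closedBall (0 : EuclideanSpace ℝ (Fin n)) 1) := by
  have hball := volume_segment_single_zero_add_closedBall_eq_lintegral (n := n) le_rfl
  rw [zero_smul, segment_same, singleton_add_closedBall_zero] at hball
  rw [volume_segment_single_zero_add_closedBall_eq_lintegral ha, hball, add_comm,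
    ← setLIntegral_const, ← lintegral_add_left measurable_const]
  refine setLIntegral_congr_fun measurableSet_closedBall fun y _ => ?_
  rw [zero_add, ENNReal.ofReal_add ha (by positivity)]

end Tube

theorem steinerFaceSum_eq {d : ℕ} {α : ℝ} (hα : 0 ≤ α) :
    steinerFaceSum d α =
      α * (volume (closedBall (0 : EuclideanSpace ℝ (Fin (d + 1))) 1)).toReal -
        (volume (closedBall (0 : EuclideanSpace ℝ (Fin (d + 2))) 1)).toReal := by
  rw [steinerFaceSum, volume_segment_single_zero_add_closedBall hα,
    singleton_add_closedBall_zero, singleton_add_closedBall_zero,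
    Measure.addHaar_closedBall_center _ (α • _),
    ENNReal.toReal_add measure_closedBall_lt_top.ne
      (ENNReal.mul_ne_top ENNReal.ofReal_ne_top measure_closedBall_lt_top.ne),
    ENNReal.toReal_mul, ENNReal.toReal_ofReal hα]
  ring

/-- The Steiner valuation is not combinatorially positive in dimension
`d = d'+2 ≥ 2`: for the segment `P = [0, αe₁]`, the alternating face sum
`S(relint P)` equals `α·vol_{d-1}(B_{d-1}) - vol_d(B_d)`, which is negative
for all sufficiently small `α > 0`. -/
theorem steiner_not_combinatorially_positive (d : ℕ) :
    (∀ α : ℝ, 0 < α →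
      steinerFaceSum d α =
        α * (volume (Metric.closedBall (0 : EuclideanSpace ℝ (Fin (d + 1))) 1)).toReal -
          (volume (Metric.closedBall (0 : EuclideanSpace ℝ (Fin (d + 2))) 1)).toReal) ∧
    ∃ α₀ : ℝ, 0 < α₀ ∧ ∀ α : ℝ, 0 < α → α < α₀ → steinerFaceSum d α < 0 := by
  have hball_pos (m : ℕ) : 0 < (volume (closedBall (0 : EuclideanSpace ℝ (Fin m)) 1)).toReal :=
    ENNReal.toReal_pos (measure_closedBall_pos volume _ one_pos).ne' measure_closedBall_lt_top.ne
  refine ⟨fun α hα => steinerFaceSum_eq hα.le, _,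
    div_pos (hball_pos (d + 2)) (hball_pos (d + 1)), fun α hα hαlt => ?_⟩
  rw [steinerFaceSum_eq hα.le, sub_neg]
  exact (lt_div_iff₀ (hball_pos (d + 1))).1 hαlt
end
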